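/- Let a = x₁⋯x_r p₁⋯pₙ and b = y₁⋯y_r q₁⋯qₙ be graphically cyclically reduced elements of a graph product Γ𝒢 such that: (i) the pᵢ and qᵢ are floating syllables of a and b respectively, and for each i, pᵢ and qᵢ are conjugate within a common vertex-group; (ii) y₁⋯y_r can be obtained from x₁⋯x_r by swapping consecutive syllables lying in adjacent vertex-groups and by cyclic permutations. Then a and b are conjugate in Γ𝒢. -/
import Mathlib


open Monoid

def graphProductRels {V : Type*} (Γ : SimpleGraph V) (G : V → Type*) [∀ v, Group (G v)] :
    Set (Monoid.CoprodI G) :=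
  {x | ∃ (u v : V) (g : G u) (h : G v), Γ.Adj u v ∧
    x = CoprodI.of g * CoprodI.of h * (CoprodI.of g)⁻¹ * (CoprodI.of h)⁻¹}

def GraphProduct {V : Type*} (Γ : SimpleGraph V) (G : V → Type*) [∀ v, Group (G v)] : Type _ :=
  Monoid.CoprodI G ⧸ Subgroup.normalClosure (graphProductRels Γ G)

instance {V : Type*} (Γ : SimpleGraph V) (G : V → Type*) [∀ v, Group (G v)] :
    Group (GraphProduct Γ G) := by
  unfold GraphProduct; infer_instance

/-- The canonical map from a vertex group to the graph product. -/
def GraphProduct.of {V : Type*} (Γ : SimpleGraph V) (G : V → Type*) [∀ v, Group (G v)] {u : V} :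
    G u →* GraphProduct Γ G :=
  (QuotientGroup.mk' (Subgroup.normalClosure (graphProductRels Γ G))).comp CoprodI.of

/-- The element of the graph product represented by a word over the union of vertex groups. -/
def wordProd {V : Type*} (Γ : SimpleGraph V) (G : V → Type*) [∀ v, Group (G v)]
    (l : List (Σ u, G u)) : GraphProduct Γ G :=
  (l.map fun s => GraphProduct.of Γ G s.2).prod

/-- A word over the union of the vertex groups is graphically reduced if all its syllables
are nontrivial and any two syllables in the same vertex group are separated by a syllable
in a non-adjacent vertex group. -/
def GraphicallyReduced {V : Type*} (Γ : SimpleGraph V) (G : V → Type*) [∀ v, Group (G v)]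
    (l : List (Σ u, G u)) : Prop :=
  (∀ s ∈ l, s.2 ≠ (1 : G s.1)) ∧
  ∀ (i j : ℕ) (hi : i < l.length) (hj : j < l.length), i < j →
    (l.get ⟨i, hi⟩).1 = (l.get ⟨j, hj⟩).1 →
    ∃ (k : ℕ) (hk : k < l.length), i < k ∧ k < j ∧
      ¬ Γ.Adj (l.get ⟨i, hi⟩).1 (l.get ⟨k, hk⟩).1

/-- Swapping two consecutive syllables lying in adjacent vertex groups. -/
def AdjSwap {V : Type*} (Γ : SimpleGraph V) (G : V → Type*) [∀ v, Group (G v)]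
    (l l' : List (Σ u, G u)) : Prop :=
  ∃ (w₁ w₂ : List (Σ u, G u)) (s t : Σ u, G u), Γ.Adj s.1 t.1 ∧
    l = w₁ ++ s :: t :: w₂ ∧ l' = w₁ ++ t :: s :: w₂
/-- Graphically cyclically reduced words. -/
def GraphCyclicallyReduced {V : Type*} (Γ : SimpleGraph V) (G : V → Type*) [∀ v, Group (G v)]
    (l : List (Σ u, G u)) : Prop :=
  GraphicallyReduced Γ G l ∧
  ¬ ∃ (i j : ℕ) (hi : i < l.length) (hj : j < l.length), i < j ∧
      (l.get ⟨i, hi⟩).1 = (l.get ⟨j, hj⟩).1 ∧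
      (∀ (k : ℕ) (hk : k < l.length), k < i → Γ.Adj (l.get ⟨i, hi⟩).1 (l.get ⟨k, hk⟩).1) ∧
      (∀ (k : ℕ) (hk : k < l.length), j < k → Γ.Adj (l.get ⟨j, hj⟩).1 (l.get ⟨k, hk⟩).1)

/-- Word length with respect to a generating set. -/
noncomputable def wlen {H : Type*} [Group H] (S : Set H) (g : H) : ℕ :=
  sInf {n | ∃ l : List H, (∀ x ∈ l, x ∈ S ∨ x⁻¹ ∈ S) ∧ l.prod = g ∧ l.length = n}

/-- Conjugacy length function with respect to a generating set. -/
noncomputable def CLF {H : Type*} [Group H] (S : Set H) (n : ℕ) : ℕ∞ :=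
  ⨆ (a : H) (b : H) (_ : (∃ c, c * a * c⁻¹ = b) ∧ wlen S a + wlen S b ≤ n),
    ((sInf {k | ∃ c, c * a * c⁻¹ = b ∧ wlen S c = k} : ℕ) : ℕ∞)

/-- The generating set of a graph product induced by generating sets of the vertex groups. -/
noncomputable def genSet {V : Type*} (Γ : SimpleGraph V) (G : V → Type*) [∀ v, Group (G v)]
    (X : ∀ v, Set (G v)) : Set (GraphProduct Γ G) :=
  ⋃ u : V, ⇑(GraphProduct.of Γ G (u := u)) '' X u

/-- The syllable at position `i` is floating: its vertex group is adjacent to the vertex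
group of every other syllable of the word. -/
def FloatingAt {V : Type*} (Γ : SimpleGraph V) (G : V → Type*) [∀ v, Group (G v)]
    (l : List (Σ u, G u)) (i : ℕ) (hi : i < l.length) : Prop :=
  ∀ (j : ℕ) (hj : j < l.length), j ≠ i → Γ.Adj (l.get ⟨i, hi⟩).1 (l.get ⟨j, hj⟩).1

/-- One step of: swapping consecutive syllables in adjacent vertex groups, or a cyclic
permutation. -/
def SwapOrCyc {V : Type*} (Γ : SimpleGraph V) (G : V → Type*) [∀ v, Group (G v)]
    (l l' : List (Σ u, G u)) : Prop :=
  AdjSwap Γ G l l' ∨ ∃ (a : Σ u, G u) (t : List (Σ u, G u)), l = a :: t ∧ l' = t ++ [a]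

section
variable {V : Type*} (Γ : SimpleGraph V) (G : V → Type*) [∀ v, Group (G v)]

theorem GP.commute_of_adj {u v : V} (h : Γ.Adj u v) (g : G u) (k : G v) :
    Commute (GraphProduct.of Γ G g) (GraphProduct.of Γ G k) := by
  have hm : (CoprodI.of g * CoprodI.of k * (CoprodI.of g)⁻¹ * (CoprodI.of k)⁻¹) ∈
      Subgroup.normalClosure (graphProductRels Γ G) :=
    Subgroup.subset_normalClosure ⟨u, v, g, k, h, rfl⟩
  have h1 : (QuotientGroup.mk' (Subgroup.normalClosure (graphProductRels Γ G)))
      (CoprodI.of g * CoprodI.of k * (CoprodI.of g)⁻¹ * (CoprodI.of k)⁻¹) = 1 :=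
    (QuotientGroup.eq_one_iff _).2 hm
  simp only [map_mul, map_inv] at h1
  have h2 : GraphProduct.of Γ G g * GraphProduct.of Γ G k *
      (GraphProduct.of Γ G g)⁻¹ * (GraphProduct.of Γ G k)⁻¹ = 1 := h1
  rw [commute_iff_eq, ← mul_inv_eq_one, mul_inv_rev, ← mul_assoc]
  simpa [mul_assoc] using h2

theorem wordProd_nil : wordProd Γ G [] = 1 := rfl

theorem wordProd_cons (s : Σ u, G u) (l : List (Σ u, G u)) :
    wordProd Γ G (s :: l) = GraphProduct.of Γ G s.2 * wordProd Γ G l := by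
  simp [wordProd]

theorem wordProd_append (l₁ l₂ : List (Σ u, G u)) :
    wordProd Γ G (l₁ ++ l₂) = wordProd Γ G l₁ * wordProd Γ G l₂ := by
  simp [wordProd]

end

section
variable {V : Type*} (Γ : SimpleGraph V) (G : V → Type*) [∀ v, Group (G v)]

theorem GP.aux_conj (p q : List (Σ u, G u)) (hpq : p.length = q.length)
    (hconj : ∀ (i : ℕ) (hi : i < p.length) (hi' : i < q.length),
      ∃ (u : V) (g h c : G u), p.get ⟨i, hi⟩ = ⟨u, g⟩ ∧ q.get ⟨i, hi'⟩ = ⟨u, h⟩ ∧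
        c * g * c⁻¹ = h)
    (hadj : ∀ (i j : ℕ) (hi : i < p.length) (hj : j < p.length), i ≠ j →
      Γ.Adj (p.get ⟨i, hi⟩).1 (p.get ⟨j, hj⟩).1) :
    ∃ d : GraphProduct Γ G, d * wordProd Γ G p * d⁻¹ = wordProd Γ G q ∧
      ∀ z : GraphProduct Γ G,
        (∀ (i : ℕ) (hi : i < p.length) (k : G (p.get ⟨i, hi⟩).1),
          Commute z (GraphProduct.of Γ G k)) → Commute z d := by
  induction p generalizing q with
  | nil =>
    have hq : q = [] := List.length_eq_zero_iff.mp hpq.symm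
    subst hq
    exact ⟨1, by simp [wordProd], fun z _ => Commute.one_right z⟩
  | cons s p' ih =>
    cases q with
    | nil => simp at hpq
    | cons t q' =>
      obtain ⟨u, g, h, c, hs, ht, hc⟩ := hconj 0 (by simp) (by simp)
      simp only [List.get] at hs ht
      subst hs ht
      have hpq' : p'.length = q'.length := by simpa using hpq
      have hconj' : ∀ (i : ℕ) (hi : i < p'.length) (hi' : i < q'.length),
          ∃ (u' : V) (g' h' c' : G u'), p'.get ⟨i, hi⟩ = ⟨u', g'⟩ ∧
            q'.get ⟨i, hi'⟩ = ⟨u', h'⟩ ∧ c' * g' * c'⁻¹ = h' := by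
        intro i hi hi'
        obtain ⟨u', g', h', c', h1, h2, h3⟩ := hconj (i + 1) (by simp; omega) (by simp; omega)
        exact ⟨u', g', h', c', by simpa using h1, by simpa using h2, h3⟩
      have hadj' : ∀ (i j : ℕ) (hi : i < p'.length) (hj : j < p'.length), i ≠ j →
          Γ.Adj (p'.get ⟨i, hi⟩).1 (p'.get ⟨j, hj⟩).1 := by
        intro i j hi hj hij
        have := hadj (i + 1) (j + 1) (by simp; omega) (by simp; omega) (by omega)
        simpa using this
      have hadj0 : ∀ (i : ℕ) (hi : i < p'.length), Γ.Adj u (p'.get ⟨i, hi⟩).1 := by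
        intro i hi
        have := hadj 0 (i + 1) (by simp) (by simp; omega) (by omega)
        simpa using this
      obtain ⟨d', hd', hcomm'⟩ := ih q' hpq' hconj' hadj'
      -- of g commutes with d'
      have h1 : Commute (GraphProduct.of Γ G g) d' :=
        hcomm' _ (fun i hi k => GP.commute_of_adj Γ G (hadj0 i hi) g k)
      -- of c commutes with wordProd q'
      have h2 : Commute (GraphProduct.of Γ G c) (wordProd Γ G q') := by
        refine Commute.list_prod_right _ _ (fun z hz => ?_)
        obtain ⟨a, ha, rfl⟩ := List.mem_map.mp hz
        obtain ⟨j, hj⟩ := List.mem_iff_get.mp ha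
        have hjp : (j : ℕ) < p'.length := by rw [hpq']; exact j.2
        obtain ⟨u', g', h', c', hp'j, hq'j, -⟩ := hconj' j hjp j.2
        have hadju : Γ.Adj u u' := by
          have := hadj0 j hjp
          rwa [hp'j] at this
        subst hj
        rw [hq'j]
        exact GP.commute_of_adj Γ G hadju c h'
      refine ⟨GraphProduct.of Γ G c * d', ?_, ?_⟩
      · rw [wordProd_cons, wordProd_cons]
        simp only [mul_inv_rev]
        calc GraphProduct.of Γ G c * d' * (GraphProduct.of Γ G g * wordProd Γ G p') *
              (d'⁻¹ * (GraphProduct.of Γ G c)⁻¹)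
            = GraphProduct.of Γ G c * (d' * GraphProduct.of Γ G g) *
              (wordProd Γ G p' * d'⁻¹) * (GraphProduct.of Γ G c)⁻¹ := by
              simp [mul_assoc]
          _ = GraphProduct.of Γ G c * (GraphProduct.of Γ G g * d') *
              (wordProd Γ G p' * d'⁻¹) * (GraphProduct.of Γ G c)⁻¹ := by
              rw [h1.symm.eq]
          _ = GraphProduct.of Γ G c * GraphProduct.of Γ G g *
              (d' * wordProd Γ G p' * d'⁻¹) * (GraphProduct.of Γ G c)⁻¹ := by
              simp [mul_assoc]
          _ = GraphProduct.of Γ G c * GraphProduct.of Γ G g *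
              wordProd Γ G q' * (GraphProduct.of Γ G c)⁻¹ := by rw [hd']
          _ = GraphProduct.of Γ G c * GraphProduct.of Γ G g *
              (GraphProduct.of Γ G c)⁻¹ * wordProd Γ G q' := by
              rw [mul_assoc _ (wordProd Γ G q'), ← h2.inv_left.eq, ← mul_assoc]
          _ = GraphProduct.of Γ G h * wordProd Γ G q' := by
              rw [← hc]; simp [mul_assoc]
      · intro z hz
        have hzc : Commute z (GraphProduct.of Γ G c) := hz 0 (by simp) c
        have hzd : Commute z d' := hcomm' z (fun i hi k => by
          have := hz (i + 1) (by simp; omega) (by simpa using k)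
          simpa using this)
        exact hzc.mul_right hzd
end

section
variable {V : Type*} (Γ : SimpleGraph V) (G : V → Type*) [∀ v, Group (G v)]

theorem GP.chain_conj (x y : List (Σ u, G u))
    (hperm : Relation.ReflTransGen (SwapOrCyc Γ G) x y) :
    x.Perm y ∧ ∃ c : GraphProduct Γ G,
      c * wordProd Γ G x * c⁻¹ = wordProd Γ G y ∧
      ∀ z : GraphProduct Γ G,
        (∀ s ∈ x, ∀ k : G s.1, Commute z (GraphProduct.of Γ G k)) → Commute z c := by
  induction hperm with
  | refl => exact ⟨List.Perm.refl x, 1, by simp, fun z _ => Commute.one_right z⟩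
  | tail hxb step ih =>
    obtain ⟨hp1, c₁, hc₁, hz₁⟩ := ih
    rcases step with ⟨w₁, w₂, s, t, hadj, rfl, rfl⟩ | ⟨a, tl, rfl, rfl⟩
    · have heq : wordProd Γ G (w₁ ++ s :: t :: w₂) = wordProd Γ G (w₁ ++ t :: s :: w₂) := by
        rw [wordProd_append, wordProd_append, wordProd_cons, wordProd_cons,
          wordProd_cons, wordProd_cons, ← mul_assoc (GraphProduct.of Γ G s.2),
          (GP.commute_of_adj Γ G hadj s.2 t.2).eq, mul_assoc]
      exact ⟨hp1.trans (List.Perm.append_left w₁ (List.Perm.swap t s w₂)), c₁,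
        by rw [hc₁, heq], hz₁⟩
    · refine ⟨hp1.trans (by simpa using List.perm_append_comm (l₁ := [a]) (l₂ := tl)),
        (GraphProduct.of Γ G a.2)⁻¹ * c₁, ?_, ?_⟩
      · rw [mul_inv_rev, inv_inv]
        calc (GraphProduct.of Γ G a.2)⁻¹ * c₁ * wordProd Γ G x *
              (c₁⁻¹ * GraphProduct.of Γ G a.2)
            = (GraphProduct.of Γ G a.2)⁻¹ * (c₁ * wordProd Γ G x * c₁⁻¹) *
              GraphProduct.of Γ G a.2 := by simp [mul_assoc]
          _ = (GraphProduct.of Γ G a.2)⁻¹ * wordProd Γ G (a :: tl) *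
              GraphProduct.of Γ G a.2 := by rw [hc₁]
          _ = wordProd Γ G (tl ++ [a]) := by
              rw [wordProd_cons, wordProd_append, wordProd_cons, wordProd_nil]
              simp [mul_assoc]
      · intro z hz
        have ha : a ∈ x := hp1.symm.mem_iff.mp (by simp)
        exact ((hz a ha a.2).inv_right).mul_right (hz₁ z hz)
end

/-- Sufficient condition for conjugacy of graphically cyclically reduced elements:
if `a = x₁⋯x_r p₁⋯pₙ` and `b = y₁⋯y_r q₁⋯qₙ` where the `pᵢ`, `qᵢ` are floating syllables
with `pᵢ` and `qᵢ` conjugate in a common vertex group, and `y₁⋯y_r` is obtained from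
`x₁⋯x_r` by adjacent swaps and cyclic permutations, then `a` and `b` are conjugate. -/
theorem conjugate_of_cyclically_reduced_data {V : Type*} (Γ : SimpleGraph V)
    (G : V → Type*) [∀ v, Group (G v)] [∀ v, Nontrivial (G v)]
    (x y p q : List (Σ u, G u))
    (hxy : x.length = y.length) (hpq : p.length = q.length)
    (ha : GraphCyclicallyReduced Γ G (x ++ p))
    (hb : GraphCyclicallyReduced Γ G (y ++ q))
    (hfp : ∀ (i : ℕ) (hi : i < p.length), FloatingAt Γ G (x ++ p) (x.length + i)
      (by simpa using Nat.add_lt_add_left hi x.length))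
    (hfq : ∀ (i : ℕ) (hi : i < q.length), FloatingAt Γ G (y ++ q) (y.length + i)
      (by simpa using Nat.add_lt_add_left hi y.length))
    (hconj : ∀ (i : ℕ) (hi : i < p.length) (hi' : i < q.length),
      ∃ (u : V) (g h c : G u), p.get ⟨i, hi⟩ = ⟨u, g⟩ ∧ q.get ⟨i, hi'⟩ = ⟨u, h⟩ ∧
        c * g * c⁻¹ = h)
    (hperm : Relation.ReflTransGen (SwapOrCyc Γ G) x y) :
    ∃ c : GraphProduct Γ G,
      c * wordProd Γ G (x ++ p) * c⁻¹ = wordProd Γ G (y ++ q) := by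
  classical
  have hget_p : ∀ (i : ℕ) (hi : i < p.length) (h' : x.length + i < (x ++ p).length),
      (x ++ p).get ⟨x.length + i, h'⟩ = p.get ⟨i, hi⟩ := by
    intro i hi h'; simp [List.getElem_append_right]
  have hget_x : ∀ (j : ℕ) (hj : j < x.length) (h' : j < (x ++ p).length),
      (x ++ p).get ⟨j, h'⟩ = x.get ⟨j, hj⟩ := by
    intro j hj h'; simp [List.getElem_append_left hj]
  -- pairwise adjacency within p
  have hadjpp : ∀ (i j : ℕ) (hi : i < p.length) (hj : j < p.length), i ≠ j →
      Γ.Adj (p.get ⟨i, hi⟩).1 (p.get ⟨j, hj⟩).1 := by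
    intro i j hi hj hij
    have h' : x.length + j < (x ++ p).length := by rw [List.length_append]; omega
    have := hfp i hi (x.length + j) h' (by omega)
    rwa [hget_p i hi, hget_p j hj] at this
  -- adjacency of p's vertices with x's syllables
  have hadjpx : ∀ (i : ℕ) (hi : i < p.length), ∀ s ∈ x, Γ.Adj (p.get ⟨i, hi⟩).1 s.1 := by
    intro i hi s hs
    obtain ⟨j, rfl⟩ := List.mem_iff_get.mp hs
    have h' : (j : ℕ) < (x ++ p).length := by rw [List.length_append]; omega
    have := hfp i hi j h' (by omega)
    rwa [hget_p i hi, hget_x j j.2] at this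
  obtain ⟨d, hd, hcommd⟩ := GP.aux_conj Γ G p q hpq hconj hadjpp
  obtain ⟨hpxy, cy, hcy, hzcy⟩ := GP.chain_conj Γ G x y hperm
  have hCyP : Commute cy (wordProd Γ G p) := by
    refine Commute.list_prod_right _ _ ?_
    intro z hz
    obtain ⟨a, ha', rfl⟩ := List.mem_map.mp hz
    obtain ⟨i, rfl⟩ := List.mem_iff_get.mp ha'
    exact (hzcy _ (fun s hs k => GP.commute_of_adj Γ G (hadjpx i i.2 s hs) _ k)).symm
  have hdY : Commute d (wordProd Γ G y) := by
    refine Commute.list_prod_right _ _ ?_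
    intro z hz
    obtain ⟨a, ha', rfl⟩ := List.mem_map.mp hz
    have hax : a ∈ x := hpxy.mem_iff.mpr ha'
    refine (hcommd _ (fun i hi k => ?_)).symm
    exact GP.commute_of_adj Γ G (hadjpx i hi a hax).symm a.2 k
  have e1 : cy * wordProd Γ G x = wordProd Γ G y * cy := mul_inv_eq_iff_eq_mul.mp hcy
  have e2 : d * wordProd Γ G p = wordProd Γ G q * d := mul_inv_eq_iff_eq_mul.mp hd
  refine ⟨d * cy, ?_⟩
  rw [wordProd_append, wordProd_append, mul_inv_eq_iff_eq_mul]
  calc d * cy * (wordProd Γ G x * wordProd Γ G p)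
      = d * (cy * wordProd Γ G x) * wordProd Γ G p := by simp [mul_assoc]
    _ = d * (wordProd Γ G y * cy) * wordProd Γ G p := by rw [e1]
    _ = (d * wordProd Γ G y) * (cy * wordProd Γ G p) := by simp [mul_assoc]
    _ = (wordProd Γ G y * d) * (wordProd Γ G p * cy) := by rw [hdY.eq, hCyP.eq]
    _ = wordProd Γ G y * (d * wordProd Γ G p) * cy := by simp [mul_assoc]
    _ = wordProd Γ G y * (wordProd Γ G q * d) * cy := by rw [e2]
    _ = wordProd Γ G y * wordProd Γ G q * (d * cy) := by simp [mul_assoc]
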